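/- Suppose λ solves λ' + λ² = f on [0,∞) where f is bounded, f > ε a.e. for some ε > 0, f(r) → 1 as r → ∞, λ(0) > 0, and λ stays bounded. Then λ(r) → 1 as r → ∞. -/

import Mathlib

/-!
A differentiable `g` whose derivative is `≥ 0` almost everywhere while `g` lies in a band
`(c₀, c)` cannot pass from `≥ c` to `< c`. Since `|λ| < √ε` forces `λ' > ε - λ² > 0`, this keeps
`λ ≥ min (λ 0) √ε > 0`. For `c > 1` and large `r` we have `f ≤ c`, hence `λ' ≤ c - c² < 0`
whenever `λ > c`: so `λ` falls below `c` at some time and stays there. Symmetrically, for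
`0 < c < 1`, positivity of `λ` gives `λ' ≥ c - c² > 0` whenever `λ < c`.
-/

open MeasureTheory Real Set Filter

theorem le_of_ae_deriv_nonneg {g g' : ℝ → ℝ} {a b : ℝ} (hab : a ≤ b)
    (hcont : ContinuousOn g (Icc a b)) (hderiv : ∀ x ∈ Ioo a b, HasDerivAt g (g' x) x)
    (hnonneg : ∀ᵐ x ∂volume.restrict (Ioo a b), 0 ≤ g' x) : g a ≤ g b := by
  have hmin : (fun x => min (g' x) 0) =ᵐ[volume.restrict (Icc a b)] 0 := by
    rw [← Measure.restrict_congr_set Ioo_ae_eq_Icc]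
    filter_upwards [hnonneg] with x hx using min_eq_right hx
  -- `min g' 0` is an integrable lower bound of `g'` with integral `0`, so no integrability of
  -- `g'` itself is needed.
  have hle := intervalIntegral.integral_le_sub_of_hasDeriv_right_of_le hab hcont
    (fun x hx => (hderiv x hx).hasDerivWithinAt) (integrableOn_zero.congr_fun_ae hmin.symm)
    (fun x _ => min_le_left (g' x) 0)
  have hzero : ∫ x in a..b, min (g' x) 0 = 0 := by
    rw [intervalIntegral.integral_of_le hab, Measure.restrict_congr_set Ioc_ae_eq_Icc,
      integral_congr_ae hmin]
    exact integral_zero _ _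
  linarith

theorem le_of_ae_deriv_nonneg_of_mem_Ioo {g g' : ℝ → ℝ} {a b c₀ c : ℝ} (hab : a ≤ b)
    (hcont : ContinuousOn g (Icc a b)) (hderiv : ∀ x ∈ Ioo a b, HasDerivAt g (g' x) x)
    (hc₀ : c₀ < c) (ha : c ≤ g a)
    (hnonneg : ∀ᵐ x ∂volume.restrict (Ioo a b), g x ∈ Ioo c₀ c → 0 ≤ g' x) : c ≤ g b := by
  by_contra! hb
  -- `s` is the last time in `[a, b]` at which `g ≥ c`, and `u` the first time after `s`
  -- at which `g ≤ c₀` (or `b`); on `(s, u)` the value of `g` stays in `(c₀, c)`.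
  set S := Icc a b ∩ g ⁻¹' Ici c
  have hS : IsClosed S := hcont.preimage_isClosed_of_isClosed isClosed_Icc isClosed_Ici
  have hsS : sSup S ∈ S := hS.csSup_mem ⟨a, ⟨le_rfl, hab⟩, ha⟩ ⟨b, fun t ht => ht.1.2⟩
  set s := sSup S
  set T := (Icc s b ∩ g ⁻¹' Iic c₀) ∪ {b}
  have hT : IsClosed T :=
    ((hcont.mono (Icc_subset_Icc_left hsS.1.1)).preimage_isClosed_of_isClosed isClosed_Icc
      isClosed_Iic).union isClosed_singleton
  have hTbdd : BddBelow T := ⟨s, by rintro t (ht | rfl); exacts [ht.1.1, hsS.1.2]⟩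
  have huT : sInf T ∈ T := hT.csInf_mem ⟨b, Or.inr rfl⟩ hTbdd
  set u := sInf T
  have hsu : s ≤ u := by rcases huT with hu | hu; exacts [hu.1.1, hu ▸ hsS.1.2]
  have hub : u ≤ b := csInf_le hTbdd (Or.inr rfl)
  have hgu : g u < c := by
    rcases huT with hu | hu
    exacts [hu.2.trans_lt hc₀, (congrArg g hu).trans_lt hb]
  have hmem : ∀ x ∈ Ioo s u, g x ∈ Ioo c₀ c := by
    intro x hx
    have hxb : x ≤ b := hx.2.le.trans hub
    refine ⟨lt_of_not_ge fun h => ?_, lt_of_not_ge fun h => ?_⟩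
    · exact (csInf_le hTbdd (Or.inl ⟨⟨hx.1.le, hxb⟩, h⟩)).not_gt hx.2
    · exact (le_csSup (s := S) ⟨b, fun t ht => ht.1.2⟩
        ⟨⟨hsS.1.1.trans hx.1.le, hxb⟩, h⟩).not_gt hx.1
  have hmono : g s ≤ g u := by
    refine le_of_ae_deriv_nonneg hsu (hcont.mono (Icc_subset_Icc hsS.1.1 hub))
      (fun x hx => hderiv x (Ioo_subset_Ioo hsS.1.1 hub hx)) ?_
    have hsub : Ioo s u ⊆ Ioo a b := Ioo_subset_Ioo hsS.1.1 hub
    filter_upwards [ae_restrict_of_ae_restrict_of_subset hsub hnonneg,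
      ae_restrict_mem measurableSet_Ioo] with x hx hxs using hx (hmem x hxs)
  have hcs : c ≤ g s := hsS.2
  linarith

theorem le_of_ae_deriv_nonpos_of_mem_Ioo {g g' : ℝ → ℝ} {a b c c₀ : ℝ} (hab : a ≤ b)
    (hcont : ContinuousOn g (Icc a b)) (hderiv : ∀ x ∈ Ioo a b, HasDerivAt g (g' x) x)
    (hc₀ : c < c₀) (ha : g a ≤ c)
    (hnonpos : ∀ᵐ x ∂volume.restrict (Ioo a b), g x ∈ Ioo c c₀ → g' x ≤ 0) : g b ≤ c := by
  have := le_of_ae_deriv_nonneg_of_mem_Ioo (g := -g) (g' := -g') hab hcont.neg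
    (fun x hx => (hderiv x hx).neg) (neg_lt_neg hc₀) (neg_le_neg ha) <| by
      filter_upwards [hnonpos] with x hx hmem
      simp only [Pi.neg_apply, mem_Ioo, neg_lt_neg_iff] at hmem ⊢
      exact neg_nonneg.2 (hx ⟨hmem.2, hmem.1⟩)
  simpa using this

theorem exists_le_of_deriv_le_neg {g g' : ℝ → ℝ} {R c δ : ℝ} (hδ : 0 < δ)
    (hderiv : ∀ x ≥ R, HasDerivAt g (g' x) x) (hslope : ∀ x ≥ R, c < g x → g' x ≤ -δ) :
    ∃ x ≥ R, g x ≤ c := by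
  by_contra! hgt
  have hd : ∀ x ≥ R, HasDerivAt (fun x => g x + δ * x) (g' x + δ) x := fun x hx => by
    simpa using (hderiv x hx).fun_add ((hasDerivAt_id' x).const_mul δ)
  have hanti : AntitoneOn (fun x => g x + δ * x) (Ici R) := by
    refine antitoneOn_of_hasDerivWithinAt_nonpos (convex_Ici R)
      (fun x hx => (hd x hx).continuousAt.continuousWithinAt)
      (fun x hx => (hd x (interior_subset hx)).hasDerivWithinAt) (fun x hx => ?_)
    linarith [hslope x (interior_subset hx) (hgt x (interior_subset hx))]
  set x := R + (g R - c) / δ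
  have hRx : R ≤ x := le_add_of_nonneg_right (div_nonneg (sub_nonneg.2 (hgt R le_rfl).le) hδ.le)
  have := hanti (mem_Ici.2 le_rfl) hRx hRx
  have hδx : δ * x = δ * R + (g R - c) := by simp only [x]; field_simp
  linarith [hgt x hRx]

theorem exists_ge_of_deriv_ge {g g' : ℝ → ℝ} {R c δ : ℝ} (hδ : 0 < δ)
    (hderiv : ∀ x ≥ R, HasDerivAt g (g' x) x) (hslope : ∀ x ≥ R, g x < c → δ ≤ g' x) :
    ∃ x ≥ R, c ≤ g x := by
  obtain ⟨x, hx, hgx⟩ := exists_le_of_deriv_le_neg (g := -g) (g' := -g') (c := -c) hδ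
    (fun x hx => (hderiv x hx).neg) fun x hx hlt => neg_le_neg (hslope x hx (neg_lt_neg_iff.1 hlt))
  exact ⟨x, hx, neg_le_neg_iff.1 hgx⟩

section Riccati

variable {f lam : ℝ → ℝ}

theorem riccati_pos {ε : ℝ} (hε : 0 < ε) (hf_pos : ∀ᵐ r ∂(volume.restrict (Ici (0:ℝ))), ε < f r)
    (hlam : ∀ r ≥ (0:ℝ), HasDerivAt lam (f r - lam r ^ 2) r) (h0 : 0 < lam 0) :
    ∀ r ≥ (0:ℝ), 0 < lam r := by
  intro r hr
  have hsqrt : 0 < √ε := sqrt_pos.2 hε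
  have hlow : min (lam 0) √ε ≤ lam r := by
    refine le_of_ae_deriv_nonneg_of_mem_Ioo (c₀ := -√ε) hr
      (fun x hx => (hlam x hx.1).continuousAt.continuousWithinAt)
      (fun x hx => hlam x hx.1.le) (lt_min (by linarith) (by linarith)) (min_le_left _ _) ?_
    filter_upwards [ae_restrict_of_ae_restrict_of_subset
      (Ioo_subset_Ioi_self.trans Ioi_subset_Ici_self) hf_pos] with x hfx hmem
    have hsq : lam x ^ 2 < ε := by
      simpa [sq_sqrt hε.le] using sq_lt_sq' hmem.1 (hmem.2.trans_le (min_le_right _ _))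
    linarith
  exact (lt_min h0 hsqrt).trans_le hlow

theorem riccati_eventually_le (hlam : ∀ r ≥ (0:ℝ), HasDerivAt lam (f r - lam r ^ 2) r)
    {c : ℝ} (hc : 1 < c) (hf : ∀ᶠ r in atTop, f r ≤ c) : ∀ᶠ r in atTop, lam r ≤ c := by
  obtain ⟨R, hR⟩ := eventually_atTop.1 (hf.and (eventually_ge_atTop 0))
  have hderiv : ∀ x ≥ R, HasDerivAt lam (f x - lam x ^ 2) x := fun x hx => hlam x (hR x hx).2
  have hdrop : ∀ x ≥ R, c < lam x → f x - lam x ^ 2 ≤ -(c * (c - 1)) := fun x hx hlt => by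
    nlinarith [(hR x hx).1]
  obtain ⟨r₁, hr₁, hlam₁⟩ := exists_le_of_deriv_le_neg (by nlinarith) hderiv hdrop
  refine eventually_atTop.2 ⟨r₁, fun r hr => le_of_ae_deriv_nonpos_of_mem_Ioo (c₀ := c + 1) hr
    (fun x hx => (hderiv x (hr₁.trans hx.1)).continuousAt.continuousWithinAt)
    (fun x hx => hderiv x (hr₁.trans hx.1.le)) (lt_add_one c) hlam₁ ?_⟩
  filter_upwards [ae_restrict_mem measurableSet_Ioo] with x hx hmem
  nlinarith [hdrop x (hr₁.trans hx.1.le) hmem.1]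

theorem riccati_eventually_ge (hlam : ∀ r ≥ (0:ℝ), HasDerivAt lam (f r - lam r ^ 2) r)
    (hpos : ∀ r ≥ (0:ℝ), 0 < lam r) {c : ℝ} (hc₀ : 0 < c) (hc₁ : c < 1)
    (hf : ∀ᶠ r in atTop, c ≤ f r) : ∀ᶠ r in atTop, c ≤ lam r := by
  obtain ⟨R, hR⟩ := eventually_atTop.1 (hf.and (eventually_ge_atTop 0))
  have hderiv : ∀ x ≥ R, HasDerivAt lam (f x - lam x ^ 2) x := fun x hx => hlam x (hR x hx).2
  have hrise : ∀ x ≥ R, lam x < c → c * (1 - c) ≤ f x - lam x ^ 2 := fun x hx hlt => by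
    nlinarith [(hR x hx).1, hpos x (hR x hx).2]
  obtain ⟨r₁, hr₁, hlam₁⟩ := exists_ge_of_deriv_ge (by nlinarith) hderiv hrise
  refine eventually_atTop.2 ⟨r₁, fun r hr => le_of_ae_deriv_nonneg_of_mem_Ioo (c₀ := 0) hr
    (fun x hx => (hderiv x (hr₁.trans hx.1)).continuousAt.continuousWithinAt)
    (fun x hx => hderiv x (hr₁.trans hx.1.le)) hc₀ hlam₁ ?_⟩
  filter_upwards [ae_restrict_mem measurableSet_Ioo] with x hx hmem
  nlinarith [hrise x (hr₁.trans hx.1.le) hmem.2]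

end Riccati

theorem riccati_tendsto_one_general
    (ε : ℝ) (hε : 0 < ε)
    (f lam : ℝ → ℝ)
    (hf_pos : ∀ᵐ r ∂(volume.restrict (Ici (0:ℝ))), ε < f r)
    (hf_lim : Tendsto f atTop (nhds 1))
    (hlam : ∀ r ≥ (0:ℝ), HasDerivAt lam (f r - lam r ^ 2) r)
    (h0 : 0 < lam 0) :
    Tendsto lam atTop (nhds 1) := by
  have hpos := riccati_pos hε hf_pos hlam h0
  refine tendsto_order.2 ⟨fun a ha => ?_, fun b hb => ?_⟩
  · obtain ⟨c, hac, hc₁⟩ := exists_between (max_lt ha one_pos)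
    have hc₀ : 0 < c := (le_max_right a 0).trans_lt hac
    exact (riccati_eventually_ge hlam hpos hc₀ hc₁ (hf_lim.eventually_const_le hc₁)).mono
      fun r hr => ((le_max_left a 0).trans_lt hac).trans_le hr
  · obtain ⟨c, h1c, hcb⟩ := exists_between hb
    exact (riccati_eventually_le hlam h1c (hf_lim.eventually_le_const h1c)).mono
      fun r hr => hr.trans_lt hcb

/-- If `λ' + λ² = f` on `[0,∞)` with `f` bounded, `f > ε` a.e., `f → 1` at infinity,
`λ(0) > 0` and `λ` bounded, then `λ(r) → 1` as `r → ∞`. -/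
theorem riccati_tendsto_one
    (ε : ℝ) (hε : 0 < ε)
    (f lam : ℝ → ℝ)
    (hf_meas : Measurable f)
    (hf_bdd : ∃ M : ℝ, ∀ r ≥ (0:ℝ), |f r| ≤ M)
    (hf_pos : ∀ᵐ r ∂(volume.restrict (Ici (0:ℝ))), ε < f r)
    (hf_lim : Tendsto f atTop (nhds 1))
    (hlam : ∀ r ≥ (0:ℝ), HasDerivAt lam (f r - lam r ^ 2) r)
    (h0 : 0 < lam 0)
    (hlam_bdd : ∃ M : ℝ, ∀ r ≥ (0:ℝ), |lam r| ≤ M) :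
    Tendsto lam atTop (nhds 1) :=
  riccati_tendsto_one_general ε hε f lam hf_pos hf_lim hlam h0
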